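/- For integers n ≥ 3 define s_n = (∑_{k=1}^{n−2} 1/k) + 13/(12(n−1)) + 5/(12n) − ln n. Then lim_{n→∞} n⁴·(s_n − s_{n+1}) = 1/4. -/

import Mathlib

/-! The harmonic sums telescope, so `s n - s (n + 1)` is a rational function of `n` plus
`log (1 + 1/n)`. Expanding both in powers of `1/n`, the coefficients of `n⁻¹, n⁻², n⁻³` cancel
and that of `n⁻⁴` is `1/2 - 1/4 = 1/4`; the remainders are `O(n⁻⁵)`, with explicit bounds. -/

open Filter Topology

noncomputable def s (n : ℕ) : ℝ :=
  (∑ k ∈ Finset.Icc 1 (n - 2), (1 : ℝ) / k) + 13 / (12 * ((n : ℝ) - 1)) + 5 / (12 * n)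
    - Real.log n

lemma s_sub_s_succ {n : ℕ} (hn : 2 ≤ n) :
    s n - s (n + 1) = 1 / (12 * ((n : ℝ) - 1)) - 2 / (3 * n) - 5 / (12 * ((n : ℝ) + 1))
      + Real.log (1 + 1 / n) := by
  have hn' : (2 : ℝ) ≤ n := by exact_mod_cast hn
  have hsum : ∑ k ∈ Finset.Icc 1 (n + 1 - 2), (1 : ℝ) / k
      = ∑ k ∈ Finset.Icc 1 (n - 2), (1 : ℝ) / k + 1 / ((n : ℝ) - 1) := by
    rw [show n + 1 - 2 = n - 2 + 1 by omega, Finset.sum_Icc_succ_top (by omega),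
      show n - 2 + 1 = n - 1 by omega, Nat.cast_sub (by omega : 1 ≤ n), Nat.cast_one]
  have hlog : Real.log (1 + 1 / n) = Real.log (n + 1) - Real.log n := by
    rw [← Real.log_div (by positivity) (by positivity), add_div, div_self (by positivity),
      add_comm]
  have : (n : ℝ) - 1 ≠ 0 := by linarith
  simp only [s, hsum, hlog, Nat.cast_add, Nat.cast_one, add_sub_cancel_right]
  field_simp
  ring

lemma abs_log_one_add_sub_taylor_four_le {y : ℝ} (hy : |y| < 1) :
    |Real.log (1 + y) - (y - y ^ 2 / 2 + y ^ 3 / 3 - y ^ 4 / 4)| ≤ |y| ^ 5 / (1 - |y|) := by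
  have h := Real.abs_log_sub_add_sum_range_le (x := -y) (by rwa [abs_neg]) 4
  simp only [Finset.sum_range_succ, Finset.sum_range_zero, abs_neg, sub_neg_eq_add] at h
  convert h using 2
  push_cast
  ring

lemma abs_pow_four_mul_sub_quarter_le {x : ℝ} (hx : 3 ≤ x) :
    |x ^ 4 * (1 / (12 * (x - 1)) - 2 / (3 * x) - 5 / (12 * (x + 1)) + Real.log (1 + 1 / x))
      - 1 / 4| ≤ 3 / x := by
  have hx0 : 0 < x := by linarith
  set P := 1 / x - (1 / x) ^ 2 / 2 + (1 / x) ^ 3 / 3 - (1 / x) ^ 4 / 4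
  have habs : |1 / x| = 1 / x := abs_of_pos (by positivity)
  have hlog := abs_log_one_add_sub_taylor_four_le (y := 1 / x)
    (by rw [habs, div_lt_one hx0]; linarith)
  rw [habs] at hlog
  have hsplit : x ^ 4 * (1 / (12 * (x - 1)) - 2 / (3 * x) - 5 / (12 * (x + 1))
      + Real.log (1 + 1 / x)) - 1 / 4
      = (6 - 4 * x) / (12 * (x ^ 2 - 1)) + x ^ 4 * (Real.log (1 + 1 / x) - P) := by
    have : x - 1 ≠ 0 := by linarith
    have : x ^ 2 - 1 ≠ 0 := by nlinarith
    simp only [P]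
    field_simp
    ring
  have hrat : |(6 - 4 * x) / (12 * (x ^ 2 - 1))| ≤ 1 / x := by
    rw [abs_div, abs_of_nonpos (by linarith), abs_of_pos (by nlinarith),
      div_le_div_iff₀ (by nlinarith) hx0]
    nlinarith
  have hrem : |x ^ 4 * (Real.log (1 + 1 / x) - P)| ≤ 2 / x := by
    have hx1 : 0 < x - 1 := by linarith
    calc |x ^ 4 * (Real.log (1 + 1 / x) - P)|
        = x ^ 4 * |Real.log (1 + 1 / x) - P| := by rw [abs_mul, abs_of_pos (by positivity)]
      _ ≤ x ^ 4 * ((1 / x) ^ 5 / (1 - 1 / x)) := by gcongr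
      _ = 1 / (x - 1) := by field_simp
      _ ≤ 2 / x := by rw [div_le_div_iff₀ hx1 hx0]; linarith
  calc _ = |(6 - 4 * x) / (12 * (x ^ 2 - 1)) + x ^ 4 * (Real.log (1 + 1 / x) - P)| := by
        rw [hsplit]
    _ ≤ 1 / x + 2 / x := (abs_add_le _ _).trans (add_le_add hrat hrem)
    _ = 3 / x := by ring

theorem diff_rate_four :
    Tendsto (fun n : ℕ => (n : ℝ) ^ 4 * (s n - s (n + 1))) atTop (𝓝 (1 / 4)) := by
  rw [tendsto_iff_norm_sub_tendsto_zero]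
  refine squeeze_zero' (Eventually.of_forall fun _ => norm_nonneg _) ?_
    (tendsto_const_div_atTop_nhds_zero_nat 3)
  filter_upwards [eventually_ge_atTop 3] with n hn
  rw [s_sub_s_succ (by omega)]
  exact abs_pow_four_mul_sub_quarter_le (by exact_mod_cast hn)
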